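/- Let Λ be an artin algebra and (T,F) a torsion theory on mod Λ. Put I := ⋂_{X ∈ F} ann_Λ(X) and Γ := Λ/I. Then every module in F is annihilated by I, so F may be regarded as a full subcategory of mod Γ; the module Γ itself belongs to F; and the pair (T ∩ mod Γ, F) is a faithful torsion theory on mod Γ. -/

import Mathlib

/-!
Every module of `F` is killed by `I`, and `F` is closed under isomorphisms, submodules and finite
products. As `Λ` is left artinian, the intersection of the point annihilators `ann(x)`, `x ∈ X ∈ F`,
is already attained by finitely many of them, so `I` is the annihilator of a single element of a
module `M ∈ F`; then `Λ ⧸ I ≅ Λ x ⊆ M` lies in `F`.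

Restriction along the surjection `Λ → Λ ⧸ I` is fully faithful, and every `Λ`-module killed by `I`
is restricted from `Λ ⧸ I`. Both defining orthogonality conditions of `(T, F)` therefore descend
to `mod (Λ ⧸ I)`: every `F`-module is itself restricted from `Λ ⧸ I`, and a map from a `T`-module
to a restricted module factors through its image, which is again in `T` and killed by `I`.
-/

open CategoryTheory

set_option maxHeartbeats 1000000
set_option synthInstance.maxHeartbeats 400000

noncomputable section

namespace Iyama

universe v u uv w

instance hasExtModuleCat (B : Type) [Ring B] : HasExt.{v+1} (ModuleCat.{v} B) := by
  letI := HasDerivedCategory.standard (ModuleCat.{v} B)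
  exact hasExt_of_hasDerivedCategory _

/-- additivity of `Ext.mk₀`. -/
lemma ext_mk₀_add {C : Type u} [Category.{uv} C] [Abelian C] [HasExt.{w} C]
    {X Y : C} (f g : X ⟶ Y) :
    Abelian.Ext.mk₀ (f + g) = Abelian.Ext.mk₀ f + Abelian.Ext.mk₀ g := by
  letI := HasDerivedCategory.standard C
  ext
  simp only [Abelian.Ext.mk₀_hom, Abelian.Ext.add_hom, Functor.map_add]
  simp [ShiftedHom.mk₀, Preadditive.add_comp]

variable {A B : Type} [Ring A] [Ring B]

/-- The action of `a : A` on a `B`-module `T` with commuting `A`-action,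
as a `B`-linear endomorphism. -/
def smulLinearMap (A : Type) [Ring A] {B : Type} [Ring B] (T : Type v) [AddCommGroup T]
    [Module B T] [Module A T] [SMulCommClass A B T] (a : A) : T →ₗ[B] T where
  toFun t := a • t
  map_add' x y := smul_add a x y
  map_smul' b t := smul_comm a b t

noncomputable instance extSMul (L : ModuleCat.{v} B) (T : Type v) [AddCommGroup T] [Module B T]
    [Module A T] [SMulCommClass A B T] (n : ℕ) :
    SMul A (Abelian.Ext.{v+1} L (ModuleCat.of B T) n) :=
  ⟨fun a e => e.comp (Abelian.Ext.mk₀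
    (X := ModuleCat.of B T) (Y := ModuleCat.of B T) (ModuleCat.ofHom (smulLinearMap A T a))) (add_zero n)⟩

lemma extSMul_def (L : ModuleCat.{v} B) (T : Type v) [AddCommGroup T] [Module B T]
    [Module A T] [SMulCommClass A B T] (n : ℕ) (a : A)
    (e : Abelian.Ext.{v+1} L (ModuleCat.of B T) n) :
    a • e = e.comp (Abelian.Ext.mk₀
      (X := ModuleCat.of B T) (Y := ModuleCat.of B T) (ModuleCat.ofHom (smulLinearMap A T a))) (add_zero n) :=
  rfl

lemma smulLinearMap_one (T : Type v) [AddCommGroup T] [Module B T] [Module A T]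
    [SMulCommClass A B T] :
    (ModuleCat.ofHom (smulLinearMap A T (1 : A)) : ModuleCat.of B T ⟶ ModuleCat.of B T) = 𝟙 (ModuleCat.of B T) := by
  apply ModuleCat.hom_ext
  apply LinearMap.ext
  intro t
  exact one_smul A t

noncomputable instance extModule (L : ModuleCat.{v} B) (T : Type v) [AddCommGroup T] [Module B T]
    [Module A T] [SMulCommClass A B T] (n : ℕ) :
    Module A (Abelian.Ext.{v+1} L (ModuleCat.of B T) n) where
  one_smul e := by
    rw [extSMul_def, smulLinearMap_one, Abelian.Ext.comp_mk₀_id]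
  mul_smul a b e := by
    rw [extSMul_def, extSMul_def, extSMul_def,
      Abelian.Ext.comp_assoc_of_third_deg_zero, Abelian.Ext.mk₀_comp_mk₀]
    have h2 : smulLinearMap (B := B) A T (a * b)
        = (smulLinearMap (B := B) A T a).comp (smulLinearMap (B := B) A T b) := by
      apply LinearMap.ext
      intro t
      exact mul_smul a b t
    rw [h2]
    rfl
  smul_zero a := by
    rw [extSMul_def]
    exact Abelian.Ext.zero_comp _ _ _ _ _
  smul_add a e e' := by
    rw [extSMul_def, extSMul_def, extSMul_def]
    exact Abelian.Ext.add_comp e e' _ _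
  add_smul a b e := by
    rw [extSMul_def, extSMul_def, extSMul_def]
    have : (ModuleCat.ofHom (smulLinearMap A T (a + b)) : ModuleCat.of B T ⟶ ModuleCat.of B T)
        = (ModuleCat.ofHom (smulLinearMap A T a) : ModuleCat.of B T ⟶ ModuleCat.of B T) + ModuleCat.ofHom (smulLinearMap A T b) := by
      apply ModuleCat.hom_ext
      apply LinearMap.ext
      intro t
      exact add_smul a b t
    rw [this, ext_mk₀_add]
    exact Abelian.Ext.comp_add e _ _ _
  zero_smul e := by
    rw [extSMul_def]
    have : (ModuleCat.ofHom (smulLinearMap A T (0 : A)) : ModuleCat.of B T ⟶ ModuleCat.of B T) = 0 := by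
      apply ModuleCat.hom_ext
      apply LinearMap.ext
      intro t
      exact zero_smul A t
    rw [this, Abelian.Ext.mk₀_zero]
    exact Abelian.Ext.comp_zero e _ _ _ _

/-- `Ext^i(M, T) ≠ 0` (as `B`-modules). -/
def extNonzero (B : Type) [Ring B] (M : Type v) [AddCommGroup M] [Module B M] (i : ℕ) : Prop :=
  ¬ Subsingleton (Abelian.Ext.{v+1} (ModuleCat.of B M) (ModuleCat.of B (ULift.{v} B)) i)

/-- The grade of a `B`-module `M` : `inf { i | Ext^i_B(M, B) ≠ 0 }`, as an element of `ℕ∞`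
(the infimum of the empty set being `⊤`). -/
noncomputable def grade (B : Type) [Ring B] (M : Type v) [AddCommGroup M] [Module B M] : ℕ∞ :=
  sInf ((fun i : ℕ => (i : ℕ∞)) '' {i : ℕ | extNonzero B M i})

/-- The strong grade of a `B`-module `M`: the infimum of the grades of all its submodules. -/
noncomputable def sgrade (B : Type) [Ring B] (M : Type v) [AddCommGroup M] [Module B M] : ℕ∞ :=
  ⨅ N : Submodule B M, grade B N

/-- The reduced grade of a `B`-module `M` : `inf { i > 0 | Ext^i_B(M, B) ≠ 0 }`. -/
noncomputable def rgrade (B : Type) [Ring B] (M : Type v) [AddCommGroup M] [Module B M] : ℕ∞ :=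
  sInf ((fun i : ℕ => (i : ℕ∞)) '' {i : ℕ | 0 < i ∧ extNonzero B M i})

/-- Projective dimension at most `n`, via vanishing of `Ext^i` for `i > n`. -/
def pdLE (Γ : Type) [Ring Γ] (L : Type) [AddCommGroup L] [Module Γ L] (n : ℕ) : Prop :=
  ∀ (M : Type) [AddCommGroup M] [Module Γ M], ∀ i : ℕ, n < i →
    Subsingleton (Abelian.Ext.{1} (ModuleCat.of Γ L) (ModuleCat.of Γ M) i)

/-- Projective dimension equal to `n`. -/
def pdEq (Γ : Type) [Ring Γ] (L : Type) [AddCommGroup L] [Module Γ L] (n : ℕ) : Prop :=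
  pdLE Γ L n ∧ ∀ m : ℕ, m < n → ¬ pdLE Γ L m

/-- Global dimension at most `n`: every finitely generated left module has projective
dimension at most `n`. -/
def glDimLE (Γ : Type) [Ring Γ] (n : ℕ) : Prop :=
  ∀ (L : Type) [AddCommGroup L] [Module Γ L] [Module.Finite Γ L], pdLE Γ L n

/-- The socle of a module: the sum of all its simple submodules. -/
def socle (B : Type) [Ring B] (M : Type v) [AddCommGroup M] [Module B M] : Submodule B M :=
  sSup {N : Submodule B M | IsSimpleModule B N}


/-- The `(l,n)`-condition of Iyama for a ring `Γ`: for every finitely generated right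
`Γ`-module `L`, the strong grade of the left `Γ`-module `Ext^l(L,Γ)` is at least `n`. -/
def LnCondition (Γ : Type) [Ring Γ] (l n : ℕ) : Prop :=
  ∀ (L : Type) [AddCommGroup L] [Module Γᵐᵒᵖ L] [Module.Finite Γᵐᵒᵖ L],
    (n : ℕ∞) ≤ sgrade Γ (Abelian.Ext.{1} (ModuleCat.of Γᵐᵒᵖ L) (ModuleCat.of Γᵐᵒᵖ Γ) l)

/-- The `(l,n)ᵒᵖ`-condition: `Γᵒᵖ` satisfies the `(l,n)`-condition, i.e. for every finitely
generated left `Γ`-module `L`, the strong grade of the right `Γ`-module `Ext^l(L,Γ)`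
is at least `n`. -/
def LnConditionOp (Γ : Type) [Ring Γ] (l n : ℕ) : Prop :=
  ∀ (L : Type) [AddCommGroup L] [Module Γ L] [Module.Finite Γ L],
    (n : ℕ∞) ≤ sgrade Γᵐᵒᵖ (Abelian.Ext.{1} (ModuleCat.of Γ L) (ModuleCat.of Γ Γ) l)

/-- `Γ` is an Auslander-regular ring with `gl.dim Γ ≤ 2`: global dimension at most `2`
together with the `(1,1)`- and `(2,2)`-conditions. -/
def AuslanderRegular2 (Γ : Type) [Ring Γ] : Prop :=
  glDimLE Γ 2 ∧ LnCondition Γ 1 1 ∧ LnCondition Γ 2 2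

/-- `Γ` is an Auslander algebra: `gl.dim Γ ≤ 2` and `dom.dim Γ ≥ 2`, the latter meaning that
there is an exact sequence `0 → Γ → I⁰ → I¹` with `I⁰`, `I¹` finitely generated,
projective and injective. -/
def IsAuslanderAlgebra (Γ : Type) [Ring Γ] : Prop :=
  glDimLE Γ 2 ∧
  ∃ (I0 I1 : Type) (_ : AddCommGroup I0) (_ : AddCommGroup I1)
    (_ : Module Γ I0) (_ : Module Γ I1),
    Module.Finite Γ I0 ∧ Module.Projective Γ I0 ∧ Module.Injective Γ I0 ∧
    Module.Finite Γ I1 ∧ Module.Projective Γ I1 ∧ Module.Injective Γ I1 ∧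
    ∃ (f : Γ →ₗ[Γ] I0) (g : I0 →ₗ[Γ] I1),
      Function.Injective f ∧ LinearMap.range f = LinearMap.ker g

/-- A torsion theory `(T, F)` on the category of finitely generated `Λ`-modules:
`F = T^⊥` and `T = ^⊥F` with respect to Hom-vanishing. -/
structure IsTorsionTheory (Λ : Type) [Ring Λ] (T F : Set (ModuleCat.{0} Λ)) : Prop where
  fg_T : ∀ X ∈ T, Module.Finite Λ X
  fg_F : ∀ X ∈ F, Module.Finite Λ X
  mem_F_iff : ∀ (X : ModuleCat.{0} Λ), Module.Finite Λ X →
    (X ∈ F ↔ ∀ Y ∈ T, ∀ f : Y ⟶ X, f = 0)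
  mem_T_iff : ∀ (X : ModuleCat.{0} Λ), Module.Finite Λ X →
    (X ∈ T ↔ ∀ Y ∈ F, ∀ f : X ⟶ Y, f = 0)

/-- The category `mod Λ` of finitely generated `Λ`-modules. -/
abbrev fgCat (Λ : Type) [Ring Λ] :=
  ObjectProperty.FullSubcategory (fun X : ModuleCat.{0} Λ => Module.Finite Λ X)

/-- The category `pr Γ` of finitely generated projective `Γ`-modules. -/
abbrev prCat (Γ : Type) [Ring Γ] :=
  ObjectProperty.FullSubcategory (fun X : ModuleCat.{0} Γ => Module.Finite Γ X ∧ Module.Projective Γ X)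

/-- The full subcategory of `ModuleCat Λ` on a set `F` of objects. -/
abbrev subCat {Λ : Type} [Ring Λ] (F : Set (ModuleCat.{0} Λ)) :=
  ObjectProperty.FullSubcategory (fun X : ModuleCat.{0} Λ => X ∈ F)

end Iyama

theorem exists_finset_iInf_eq {α ι : Type*} [CompleteLattice α] [WellFoundedLT α] (f : ι → α) :
    ∃ s : Finset ι, ⨅ i ∈ s, f i = ⨅ i, f i := by
  classical
  obtain ⟨_, ⟨s, rfl⟩, hmin⟩ := wellFounded_lt.has_min
    (Set.range fun s : Finset ι => ⨅ i ∈ s, f i) ⟨_, ∅, rfl⟩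
  refine ⟨s, le_antisymm (le_iInf fun j => ?_) (le_iInf₂ fun i _ => iInf_le f i)⟩
  have hins : ⨅ i ∈ insert j s, f i = ⨅ i ∈ s, f i :=
    (biInf_mono fun i => Finset.mem_insert_of_mem).eq_of_not_lt (hmin _ ⟨insert j s, rfl⟩)
  rw [← hins, Finset.iInf_insert]
  exact inf_le_left

theorem exists_fin_iInf_comp_eq {α ι : Type*} [CompleteLattice α] [WellFoundedLT α] (f : ι → α) :
    ∃ (n : ℕ) (g : Fin n → ι), ⨅ j, f (g j) = ⨅ i, f i := by
  obtain ⟨s, hs⟩ := exists_finset_iInf_eq f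
  refine ⟨s.card, fun j => s.equivFin.symm j,
    (Equiv.iInf_comp (g := fun i : s => f i) s.equivFin.symm).trans ?_⟩
  rw [← hs, iInf_subtype']

lemma annihilator_eq_iInf_ker_toSpanSingleton (R M : Type*) [Semiring R] [AddCommMonoid M]
    [Module R M] :
    Module.annihilator R M = ⨅ x : M, LinearMap.ker (LinearMap.toSpanSingleton R M x) := by
  ext a
  simp [Module.mem_annihilator]

namespace ModuleCat

variable {Λ Γ : Type} [Ring Λ] [Ring Γ] (π : Λ →+* Γ)

instance restrictScalars_full [RingHomSurjective π] : (restrictScalars π).Full where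
  map_surjective {X Y} f := ⟨ofHom
    { toFun := f
      map_add' := f.hom.map_add
      map_smul' := fun γ x => by
        obtain ⟨a, rfl⟩ := π.surjective γ
        exact f.hom.map_smul a x }, rfl⟩

lemma finite_restrictScalars_iff [RingHomSurjective π] (X : ModuleCat.{0} Γ) :
    Module.Finite Λ ((restrictScalars π).obj X) ↔ Module.Finite Γ X :=
  LinearMap.finite_iff_of_bijective (σ := π)
    { toFun := id, map_add' := fun _ _ => rfl, map_smul' := fun _ _ => rfl } Function.bijective_id

lemma ker_le_annihilator_restrictScalars (X : ModuleCat.{0} Γ) :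
    RingHom.ker π ≤ Module.annihilator Λ ((restrictScalars π).obj X) := fun a ha =>
  Module.mem_annihilator.mpr fun x => show π a • x = 0 by rw [RingHom.mem_ker.mp ha, zero_smul]

lemma exists_restrictScalars_quotient_iso (I : Ideal Λ) [I.IsTwoSided] (K : ModuleCat.{0} Λ)
    (hK : I ≤ Module.annihilator Λ K) :
    ∃ X : ModuleCat.{0} (Λ ⧸ I), Nonempty ((restrictScalars (Ideal.Quotient.mk I)).obj X ≅ K) := by
  have hKI : Module.IsTorsionBySet Λ K I :=
    (Module.isTorsionBySet_iff_subset_annihilator _ _).mpr hK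
  let _ : Module (Λ ⧸ I) K := hKI.module
  exact ⟨of (Λ ⧸ I) K, ⟨LinearEquiv.toModuleIso
    { AddEquiv.refl K with map_smul' := fun a k => hKI.mk_smul a k }⟩⟩

def restrictScalarsQuotientSelfEquiv (I : Ideal Λ) [I.IsTwoSided] :
    (restrictScalars (Ideal.Quotient.mk I)).obj (of (Λ ⧸ I) (Λ ⧸ I)) ≃ₗ[Λ] Λ ⧸ I :=
  { AddEquiv.refl (Λ ⧸ I) with
    map_smul' := fun _ γ => Submodule.Quotient.induction_on I γ fun _ => rfl }

end ModuleCat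

namespace Iyama.IsTorsionTheory

open Limits

variable {Λ : Type} [Ring Λ] {T F : Set (ModuleCat.{0} Λ)} (htf : IsTorsionTheory Λ T F)
include htf

lemma mem_F_of_mono {X Y : ModuleCat.{0} Λ} [Module.Finite Λ X] (g : X ⟶ Y) [Mono g]
    (hY : Y ∈ F) : X ∈ F :=
  (htf.mem_F_iff X ‹_›).mpr fun Z hZ f =>
    zero_of_comp_mono g ((htf.mem_F_iff Y (htf.fg_F Y hY)).mp hY Z hZ (f ≫ g))

lemma mem_F_of_iso {X Y : ModuleCat.{0} Λ} (e : X ≅ Y) (hY : Y ∈ F) : X ∈ F :=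
  have := htf.fg_F Y hY
  have := Module.Finite.equiv e.toLinearEquiv.symm
  htf.mem_F_of_mono e.hom hY

lemma mem_T_of_epi {X Y : ModuleCat.{0} Λ} (g : X ⟶ Y) [Epi g] (hX : X ∈ T) : Y ∈ T := by
  have := htf.fg_T X hX
  have hY : Module.Finite Λ Y :=
    Module.Finite.of_surjective g.hom ((ModuleCat.epi_iff_surjective g).mp ‹_›)
  exact (htf.mem_T_iff Y hY).mpr fun Z hZ f =>
    zero_of_epi_comp g ((htf.mem_T_iff X (htf.fg_T X hX)).mp hX Z hZ (g ≫ f))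

lemma mem_F_pi {ι : Type} [Finite ι] (X : ι → ModuleCat.{0} Λ) (hX : ∀ i, X i ∈ F) :
    ModuleCat.of Λ (∀ i, X i) ∈ F := by
  have := fun i => htf.fg_F (X i) (hX i)
  refine (htf.mem_F_iff _ Module.Finite.pi).mpr fun Z hZ f => ?_
  ext z i
  have hfi := (htf.mem_F_iff (X i) (htf.fg_F _ (hX i))).mp (hX i) Z hZ
    (f ≫ ModuleCat.ofHom (LinearMap.proj i))
  exact congr($hfi z)

lemma exists_ker_toSpanSingleton_eq [IsArtinianRing Λ] :
    ∃ M ∈ F, ∃ x : M,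
      LinearMap.ker (LinearMap.toSpanSingleton Λ M x) = ⨅ X ∈ F, Module.annihilator Λ X := by
  let K : (Σ X : F, X.1) → Ideal Λ := fun p => LinearMap.ker (LinearMap.toSpanSingleton Λ _ p.2)
  obtain ⟨n, p, hp⟩ := exists_fin_iInf_comp_eq K
  refine ⟨ModuleCat.of Λ (∀ j, (p j).1.1), htf.mem_F_pi _ fun j => (p j).1.2, fun j => (p j).2, ?_⟩
  have hpi : LinearMap.toSpanSingleton Λ _ (fun j => (p j).2) =
      LinearMap.pi fun j => LinearMap.toSpanSingleton Λ _ (p j).2 := rfl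
  rw [hpi, LinearMap.ker_pi, hp, iInf_sigma, iInf_subtype']
  simp only [annihilator_eq_iInf_ker_toSpanSingleton]
  rfl

section Quotient

variable (I : Ideal Λ) [I.IsTwoSided]

local notation "res" => ModuleCat.restrictScalars (Ideal.Quotient.mk I)

theorem restrictScalars_quotient (hF : ∀ X ∈ F, I ≤ Module.annihilator Λ X) :
    IsTorsionTheory (Λ ⧸ I) {X | (res).obj X ∈ T} {X | (res).obj X ∈ F} where
  fg_T X hX := (ModuleCat.finite_restrictScalars_iff _ X).mp (htf.fg_T _ hX)
  fg_F X hX := (ModuleCat.finite_restrictScalars_iff _ X).mp (htf.fg_F _ hX)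
  mem_F_iff X hX := by
    refine ⟨fun hXF Y hY f => (res).map_eq_zero_iff.mp
      ((htf.mem_F_iff _ (htf.fg_F _ hXF)).mp hXF _ hY _), fun h => ?_⟩
    refine (htf.mem_F_iff _ ((ModuleCat.finite_restrictScalars_iff _ X).mpr hX)).mpr
      fun Y hY f => ?_
    let Z := ModuleCat.of Λ (LinearMap.range f.hom)
    let p : Y ⟶ Z := ModuleCat.ofHom f.hom.rangeRestrict
    let ι : Z ⟶ (res).obj X := ModuleCat.ofHom (Y := (res).obj X) (LinearMap.range f.hom).subtype
    have : Epi p := (ModuleCat.epi_iff_surjective p).mpr f.hom.surjective_rangeRestrict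
    have hZ : I ≤ Module.annihilator Λ Z :=
      Ideal.mk_ker.ge.trans <|
        (ModuleCat.ker_le_annihilator_restrictScalars _ X).trans <|
          LinearMap.annihilator_le_of_injective _ (LinearMap.range f.hom).injective_subtype
    obtain ⟨Z', ⟨e⟩⟩ := ModuleCat.exists_restrictScalars_quotient_iso I Z hZ
    have hZ' : (res).obj Z' ∈ T := htf.mem_T_of_epi e.inv (htf.mem_T_of_epi p hY)
    have hcomp : e.hom ≫ ι = 0 := by
      rw [← (res).map_preimage (e.hom ≫ ι), h Z' hZ' ((res).preimage _), Functor.map_zero]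
    have hι : ι = 0 := by simpa using hcomp
    calc f = p ≫ ι := rfl
      _ = 0 := by rw [hι, comp_zero]
  mem_T_iff X hX := by
    refine ⟨fun hXT Y hY f => (res).map_eq_zero_iff.mp
      ((htf.mem_T_iff _ (htf.fg_T _ hXT)).mp hXT _ hY _), fun h => ?_⟩
    refine (htf.mem_T_iff _ ((ModuleCat.finite_restrictScalars_iff _ X).mpr hX)).mpr
      fun Y hY f => ?_
    obtain ⟨Y', ⟨e⟩⟩ := ModuleCat.exists_restrictScalars_quotient_iso I Y (hF Y hY)
    have hf : f ≫ e.inv = 0 := by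
      rw [← (res).map_preimage (f ≫ e.inv), h Y' (htf.mem_F_of_iso e hY) ((res).preimage _),
        Functor.map_zero]
    simpa using hf

theorem restrictScalars_quotient_self_mem {M : ModuleCat.{0} Λ} (hM : M ∈ F) (φ : Λ →ₗ[Λ] M)
    (hφ : LinearMap.ker φ = I) :
    (res).obj (ModuleCat.of (Λ ⧸ I) (Λ ⧸ I)) ∈ F := by
  have : Module.Finite Λ ((res).obj (ModuleCat.of (Λ ⧸ I) (Λ ⧸ I))) :=
    (ModuleCat.finite_restrictScalars_iff _ _).mpr (Module.Finite.self (Λ ⧸ I))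
  let e := ModuleCat.restrictScalarsQuotientSelfEquiv I
  let g : (res).obj (ModuleCat.of (Λ ⧸ I) (Λ ⧸ I)) ⟶ M :=
    ModuleCat.ofHom (Y := M) (I.liftQ φ hφ.ge ∘ₗ e.toLinearMap)
  have : Mono g := (ModuleCat.mono_iff_injective g).mpr <|
    (LinearMap.ker_eq_bot.mp (I.ker_liftQ_eq_bot' φ hφ.symm)).comp e.injective
  exact htf.mem_F_of_mono g hM

end Quotient

end Iyama.IsTorsionTheory

namespace Iyama

/-- Iyama, Proposition 1.2.1(1). -/
theorem statement0 (R : Type) [CommRing R] [IsArtinianRing R]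
    (Λ : Type) [Ring Λ] [Algebra R Λ] [Module.Finite R Λ]
    (T F : Set (ModuleCat.{0} Λ)) (htf : IsTorsionTheory Λ T F)
    (I : Ideal Λ) (hI : I = ⨅ X ∈ F, Module.annihilator Λ X) :
    (∀ X ∈ F, I ≤ Module.annihilator Λ X) ∧
    ∃ (Γ : Type) (_ : Ring Γ) (π : Λ →+* Γ),
      Function.Surjective π ∧ RingHom.ker π = I ∧
      (ModuleCat.restrictScalars π).obj (ModuleCat.of Γ Γ) ∈ F ∧
      IsTorsionTheory Γ
        {X : ModuleCat.{0} Γ | (ModuleCat.restrictScalars π).obj X ∈ T}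
        {X : ModuleCat.{0} Γ | (ModuleCat.restrictScalars π).obj X ∈ F} := by
  have hann : ∀ X ∈ F, I ≤ Module.annihilator Λ X := fun X hX => hI ▸ iInf₂_le X hX
  have : IsArtinianRing Λ := IsArtinianRing.of_finite R Λ
  obtain ⟨M, hM, x, hx⟩ := htf.exists_ker_toSpanSingleton_eq
  subst hI
  exact ⟨hann, Λ ⧸ _, inferInstance, Ideal.Quotient.mk _, Ideal.Quotient.mk_surjective,
    Ideal.mk_ker, htf.restrictScalars_quotient_self_mem _ hM _ hx,
    htf.restrictScalars_quotient _ hann⟩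

end Iyama
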